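/- arXiv:2510.26925 — 4 statements merged into one kernel-verified Lean document; each statement's English description precedes it below -/
import Mathlib

section
/- Let T > 0 and let x be a nonzero real number. Then the symmetric limit lim_{R→∞} (1/(2π)) ∫_{-R}^{R} e^{x(T+it)}/(T+it) dt exists and equals 1 if x > 0 and equals 0 if x < 0. -/
/-
For `x < 0` the integrand `e^{xs}/s` is holomorphic on `Re s ≥ T` and bounded by `e^{x Re s}/|s|`,
so Cauchy's theorem on the rectangle `[T, R] × [-R, R]` shows that the segment integral tends to
`0`: the right edge is `O(e^{xR})` and each horizontal edge is at most `e^{xT}/(|x| R)`.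

For `x > 0` split `e^{xs}/s = (e^{xs} - 1)/s + 1/s`, the first term being entire. Cauchy's theorem
on `[-T, T] × [-R, R]` moves its integral to the line `Re s = -T` up to an `O(1/R)` error. There
`e^{xs}/s` reflects under `s ↦ -s` to the case `-x < 0`, while the two `1/s` integrals differ by
`∫_{-R}^{R} 2T/(T² + t²) dt = 4 arctan(R/T) → 2π`.
-/

open Complex Filter MeasureTheory Set intervalIntegral Topology
open scoped Real Interval

namespace Perron

noncomputable def verticalIntegral (f : ℂ → ℂ) (a R : ℝ) : ℂ :=
  ∫ t in (-R)..R, f (a + t * I)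

lemma ofReal_add_mul_I_ne_zero {a : ℝ} (ha : a ≠ 0) (t : ℝ) : (a : ℂ) + t * I ≠ 0 :=
  fun h => ha (by simpa using congrArg re h)

lemma continuous_inv_ofReal_add_mul_I {a : ℝ} (ha : a ≠ 0) :
    Continuous fun t : ℝ => ((a : ℂ) + t * I)⁻¹ :=
  Continuous.inv₀ (by fun_prop) (ofReal_add_mul_I_ne_zero ha)

noncomputable def kernel (x : ℝ) (s : ℂ) : ℂ :=
  cexp (x * s) / s

lemma norm_kernel (x : ℝ) (s : ℂ) : ‖kernel x s‖ = Real.exp (x * s.re) / ‖s‖ := by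
  rw [kernel, norm_div, norm_exp]
  simp

lemma norm_verticalIntegral_sub_le {f : ℂ → ℂ} {a b R : ℝ}
    (hf : DifferentiableOn ℂ f ([[a, b]] ×ℂ [[-R, R]])) :
    ‖verticalIntegral f b R - verticalIntegral f a R‖ ≤
      ‖∫ σ in a..b, f (σ - R * I)‖ + ‖∫ σ in a..b, f (σ + R * I)‖ := by
  have h := integral_boundary_rect_eq_zero_of_differentiableOn f (a - R * I) (b + R * I)
    (by simpa using hf)
  simp only [sub_re, ofReal_re, mul_re, I_re, mul_zero, ofReal_im, I_im, mul_one, sub_self,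
    sub_zero, add_re, add_zero, sub_im, mul_im, add_im, zero_add, zero_sub,
    ofReal_neg, neg_mul, smul_eq_mul] at h
  have key : verticalIntegral f b R - verticalIntegral f a R =
      -I * ((∫ σ in a..b, f (σ + R * I)) - ∫ σ in a..b, f (σ - R * I)) := by
    rw [verticalIntegral, verticalIntegral]
    linear_combination (-I) * h + ((∫ t in (-R)..R, f (b + t * I)) -
      ∫ t in (-R)..R, f (a + t * I)) * I_sq
  rw [key, norm_mul, norm_neg, norm_I, one_mul, add_comm]
  exact norm_sub_le _ _

lemma differentiableAt_kernel (x : ℝ) {s : ℂ} (hs : s ≠ 0) :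
    DifferentiableAt ℂ (kernel x) s :=
  ((differentiableAt_id.const_mul (x : ℂ)).cexp).div differentiableAt_id hs

lemma norm_kernel_le_of_im (x : ℝ) {s : ℂ} (hs : s.im ≠ 0) :
    ‖kernel x s‖ ≤ Real.exp (x * s.re) / |s.im| := by
  rw [norm_kernel]
  exact div_le_div_of_nonneg_left (Real.exp_pos _).le (abs_pos.2 hs) (abs_im_le_norm s)

lemma norm_kernel_le_of_re (x : ℝ) {s : ℂ} (hs : 0 < s.re) :
    ‖kernel x s‖ ≤ Real.exp (x * s.re) / s.re := by
  rw [norm_kernel]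
  exact div_le_div_of_nonneg_left (Real.exp_pos _).le hs (re_le_norm s)

lemma integral_exp_mul_le_of_neg {x a b : ℝ} (hx : x < 0) (hab : a ≤ b) :
    ∫ σ in a..b, Real.exp (x * σ) ≤ Real.exp (x * a) / (-x) := by
  rw [integral_of_le hab, div_neg, ← neg_div, ← integral_exp_mul_Ioi hx]
  exact setIntegral_mono_set (integrableOn_exp_mul_Ioi hx a)
    (Eventually.of_forall fun _ => (Real.exp_pos _).le) Ioc_subset_Ioi_self.eventuallyLE

lemma norm_integral_kernel_horizontal_le {x a b : ℝ} (hx : x < 0) (hab : a ≤ b) {c : ℝ}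
    (hc : c ≠ 0) :
    ‖∫ σ in a..b, kernel x (σ + c * I)‖ ≤ Real.exp (x * a) / (-x) / |c| := by
  calc ‖∫ σ in a..b, kernel x (σ + c * I)‖
      ≤ ∫ σ in a..b, Real.exp (x * σ) / |c| := by
        refine norm_integral_le_of_norm_le hab (Eventually.of_forall fun σ _ => ?_) ?_
        · simpa using norm_kernel_le_of_im x (s := σ + c * I) (by simpa using hc)
        · exact (by fun_prop : Continuous fun σ => Real.exp (x * σ) / |c|).intervalIntegrable _ _
    _ = (∫ σ in a..b, Real.exp (x * σ)) / |c| := integral_div _ _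
    _ ≤ Real.exp (x * a) / (-x) / |c| := by gcongr; exact integral_exp_mul_le_of_neg hx hab

lemma norm_verticalIntegral_kernel_le (x : ℝ) {a R : ℝ} (ha : 0 < a) (hR : 0 ≤ R) :
    ‖verticalIntegral (kernel x) a R‖ ≤ 2 * R * (Real.exp (x * a) / a) := by
  refine (intervalIntegral.norm_integral_le_of_norm_le_const
    (C := Real.exp (x * a) / a) fun t _ => ?_).trans_eq ?_
  · simpa using norm_kernel_le_of_re x (s := a + t * I) (by simpa using ha)
  · rw [show R - -R = 2 * R by ring, abs_of_nonneg (by linarith), mul_comm]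

theorem tendsto_verticalIntegral_kernel_of_neg {x T : ℝ} (hx : x < 0) (hT : 0 < T) :
    Tendsto (verticalIntegral (kernel x) T) atTop (𝓝 0) := by
  have hbound : ∀ R ≥ T, ‖verticalIntegral (kernel x) T R‖ ≤
      2 * (Real.exp (x * T) / (-x) / R) + 2 * Real.exp (x * R) := by
    intro R hTR
    have hR : 0 < R := hT.trans_le hTR
    have hdiff : DifferentiableOn ℂ (kernel x) ([[T, R]] ×ℂ [[-R, R]]) := fun s hs =>
      (differentiableAt_kernel x fun h => by
        simp [mem_reProdIm, h, uIcc_of_le hTR] at hs; linarith).differentiableWithinAt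
    have hrect := norm_verticalIntegral_sub_le hdiff
    have hright : ‖verticalIntegral (kernel x) R R‖ ≤ 2 * Real.exp (x * R) := by
      refine (norm_verticalIntegral_kernel_le x hR hR.le).trans_eq ?_
      field_simp
    have hbot : ‖∫ σ in T..R, kernel x (σ - R * I)‖ ≤ Real.exp (x * T) / (-x) / R := by
      simpa [abs_of_pos hR, sub_eq_add_neg] using
        norm_integral_kernel_horizontal_le hx hTR (c := -R) (by linarith)
    have htop : ‖∫ σ in T..R, kernel x (σ + R * I)‖ ≤ Real.exp (x * T) / (-x) / R := by
      simpa [abs_of_pos hR] using norm_integral_kernel_horizontal_le hx hTR (c := R) hR.ne'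
    linarith [norm_le_norm_add_norm_sub (verticalIntegral (kernel x) R R)
      (verticalIntegral (kernel x) T R)]
  refine squeeze_zero_norm' (eventually_ge_atTop T |>.mono hbound) ?_
  have hdecay : Tendsto (fun R => Real.exp (x * R)) atTop (𝓝 0) :=
    Real.tendsto_exp_atBot.comp (tendsto_id.const_mul_atTop_of_neg hx)
  simpa using ((tendsto_const_nhds.div_atTop tendsto_id).const_mul 2).add (hdecay.const_mul 2)

lemma verticalIntegral_kernel_neg (x a R : ℝ) :
    verticalIntegral (kernel x) (-a) R = -verticalIntegral (kernel (-x)) a R := by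
  rw [verticalIntegral, ← neg_neg R, ← integral_comp_neg, neg_neg, verticalIntegral,
    ← intervalIntegral.integral_neg]
  congr 1 with t
  simp only [kernel]
  push_cast
  rw [show (-(a : ℂ) + -(t : ℂ) * I) = -(a + t * I) by ring, div_neg, mul_neg, neg_mul]

lemma verticalIntegral_inv_sub {T : ℝ} (hT : T ≠ 0) (R : ℝ) :
    verticalIntegral (·⁻¹) T R - verticalIntegral (·⁻¹) (-T) R =
      4 * Real.arctan (R / T) := by
  have hT' : -T ≠ 0 := neg_ne_zero.2 hT
  have hpoint : ∀ t : ℝ, ((T : ℂ) + t * I)⁻¹ - (((-T : ℝ) : ℂ) + t * I)⁻¹ =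
      ((2 * T / (T ^ 2 + t ^ 2) : ℝ) : ℂ) := by
    intro t
    rw [inv_sub_inv (ofReal_add_mul_I_ne_zero hT t) (ofReal_add_mul_I_ne_zero hT' t)]
    have hprod : ((T : ℂ) + t * I) * (((-T : ℝ) : ℂ) + t * I) = -((T : ℂ) ^ 2 + t ^ 2) := by
      push_cast; ring_nf; rw [I_sq]; ring
    rw [hprod, div_neg]
    push_cast
    ring
  have hderiv : ∀ t : ℝ,
      HasDerivAt (fun t => 2 * Real.arctan (t / T)) (2 * T / (T ^ 2 + t ^ 2)) t := by
    intro t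
    refine (((Real.hasDerivAt_arctan (t / T)).comp t
      ((hasDerivAt_id t).div_const T)).const_mul 2).congr_deriv ?_
    field_simp
  rw [verticalIntegral, verticalIntegral, ← intervalIntegral.integral_sub
    ((continuous_inv_ofReal_add_mul_I hT).intervalIntegrable _ _)
    ((continuous_inv_ofReal_add_mul_I hT').intervalIntegrable _ _)]
  simp only [hpoint]
  rw [intervalIntegral.integral_ofReal, integral_eq_sub_of_hasDerivAt (fun t _ => hderiv t)
    ((continuous_const.div (by fun_prop) fun t => by positivity).intervalIntegrable _ _)]
  rw [neg_div, Real.arctan_neg]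
  push_cast
  ring

lemma tendsto_verticalIntegral_inv_sub {T : ℝ} (hT : 0 < T) :
    Tendsto (fun R => verticalIntegral (·⁻¹) T R - verticalIntegral (·⁻¹) (-T) R) atTop
      (𝓝 (2 * π)) := by
  simp only [verticalIntegral_inv_sub hT.ne']
  have harctan := (Real.tendsto_arctan_atTop.mono_right nhdsWithin_le_nhds).comp
    (tendsto_id.atTop_div_const hT)
  have := (continuous_ofReal.tendsto _).comp (harctan.const_mul 4)
  convert this using 2
  · simp
  · push_cast; ring

noncomputable def kernelRegular (x : ℝ) : ℂ → ℂ :=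
  dslope (fun s => cexp (x * s)) 0

lemma differentiable_kernelRegular (x : ℝ) : Differentiable ℂ (kernelRegular x) := by
  rw [← differentiableOn_univ, kernelRegular, differentiableOn_dslope univ_mem]
  exact (differentiable_id.const_mul (x : ℂ)).cexp.differentiableOn

lemma kernel_eq_kernelRegular_add_inv (x : ℝ) {s : ℂ} (hs : s ≠ 0) :
    kernel x s = kernelRegular x s + s⁻¹ := by
  rw [kernelRegular, dslope_of_ne _ hs, slope_def_field, kernel, mul_zero, Complex.exp_zero,
    sub_zero]
  field_simp
  ring

lemma norm_kernelRegular_le (x : ℝ) {s : ℂ} (hs : s.im ≠ 0) :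
    ‖kernelRegular x s‖ ≤ (Real.exp (x * s.re) + 1) / |s.im| := by
  have hs0 : s ≠ 0 := fun h => hs (by simp [h])
  rw [eq_sub_of_add_eq (kernel_eq_kernelRegular_add_inv x hs0).symm, add_div]
  refine (norm_sub_le _ _).trans (add_le_add (norm_kernel_le_of_im x hs) ?_)
  rw [norm_inv, ← one_div]
  exact one_div_le_one_div_of_le (abs_pos.2 hs) (abs_im_le_norm s)

lemma norm_integral_kernelRegular_horizontal_le {x a b : ℝ} (hx : 0 ≤ x) (hab : a ≤ b)
    {c : ℝ} (hc : c ≠ 0) :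
    ‖∫ σ in a..b, kernelRegular x (σ + c * I)‖ ≤
      (Real.exp (x * b) + 1) * |b - a| / |c| := by
  refine (intervalIntegral.norm_integral_le_of_norm_le_const
    (C := (Real.exp (x * b) + 1) / |c|) fun σ hσ => ?_).trans_eq (by ring)
  rw [uIoc_of_le hab] at hσ
  calc ‖kernelRegular x (σ + c * I)‖ ≤ (Real.exp (x * σ) + 1) / |c| := by
        simpa using norm_kernelRegular_le x (s := σ + c * I) (by simpa using hc)
    _ ≤ (Real.exp (x * b) + 1) / |c| := by gcongr; exact hσ.2

lemma tendsto_verticalIntegral_kernelRegular_sub {x a b : ℝ} (hx : 0 ≤ x) (hab : a ≤ b) :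
    Tendsto (fun R =>
      verticalIntegral (kernelRegular x) b R - verticalIntegral (kernelRegular x) a R)
      atTop (𝓝 0) := by
  have hbound : ∀ R > 0, ‖verticalIntegral (kernelRegular x) b R -
      verticalIntegral (kernelRegular x) a R‖ ≤ 2 * ((Real.exp (x * b) + 1) * |b - a|) / R := by
    intro R hR
    have hbot := norm_integral_kernelRegular_horizontal_le hx hab (c := -R) (by linarith)
    have htop := norm_integral_kernelRegular_horizontal_le hx hab (c := R) hR.ne'
    simp only [ofReal_neg, neg_mul, ← sub_eq_add_neg, abs_neg, abs_of_pos hR] at hbot htop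
    exact ((norm_verticalIntegral_sub_le (differentiable_kernelRegular x).differentiableOn).trans
      (add_le_add hbot htop)).trans_eq (by ring)
  exact squeeze_zero_norm' (eventually_gt_atTop 0 |>.mono hbound)
    (tendsto_const_nhds.div_atTop tendsto_id)

lemma verticalIntegral_kernel_eq (x : ℝ) {a : ℝ} (ha : a ≠ 0) (R : ℝ) :
    verticalIntegral (kernel x) a R =
      verticalIntegral (kernelRegular x) a R + verticalIntegral (·⁻¹) a R := by
  have hcont : Continuous fun t : ℝ => kernelRegular x (a + t * I) :=
    (differentiable_kernelRegular x).continuous.comp (by fun_prop)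
  rw [verticalIntegral, verticalIntegral, verticalIntegral, ← intervalIntegral.integral_add
    (hcont.intervalIntegrable _ _) ((continuous_inv_ofReal_add_mul_I ha).intervalIntegrable _ _)]
  exact integral_congr fun t _ =>
    kernel_eq_kernelRegular_add_inv x (ofReal_add_mul_I_ne_zero ha t)

theorem tendsto_verticalIntegral_kernel_of_pos {x T : ℝ} (hx : 0 < x) (hT : 0 < T) :
    Tendsto (verticalIntegral (kernel x) T) atTop (𝓝 (2 * π)) := by
  have hsplit : ∀ R, verticalIntegral (kernel x) T R =
      (verticalIntegral (kernelRegular x) T R - verticalIntegral (kernelRegular x) (-T) R) +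
      (verticalIntegral (·⁻¹) T R - verticalIntegral (·⁻¹) (-T) R) -
      verticalIntegral (kernel (-x)) T R := by
    intro R
    linear_combination verticalIntegral_kernel_eq x hT.ne' R -
      verticalIntegral_kernel_eq x (neg_ne_zero.2 hT.ne') R + verticalIntegral_kernel_neg x T R
  have hlim := ((tendsto_verticalIntegral_kernelRegular_sub hx.le (neg_le_self hT.le)).add
    (tendsto_verticalIntegral_inv_sub hT)).sub
    (tendsto_verticalIntegral_kernel_of_neg (neg_lt_zero.2 hx) hT)
  rw [zero_add, sub_zero] at hlim
  exact hlim.congr fun R => (hsplit R).symm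

end Perron

/-- **The Perron kernel identity.**
For `T > 0` and `x ≠ 0`, the principal-value integral of `e^{x s}/s` along the
vertical line `Re s = T` equals `1` if `x > 0` and `0` if `x < 0`
(the Heaviside function `Θ(x)` away from `x = 0`). -/
theorem stmt1 (T x : ℝ) (hT : 0 < T) (hx : x ≠ 0) :
    Filter.Tendsto
      (fun R : ℝ =>
        (1 / (2 * (Real.pi : ℂ))) *
          ∫ t in (-R)..R,
            Complex.exp ((x : ℂ) * ((T : ℂ) + (t : ℂ) * Complex.I)) /
              ((T : ℂ) + (t : ℂ) * Complex.I))
      Filter.atTop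
      (nhds (if 0 < x then 1 else 0)) := by
  show Tendsto (fun R => 1 / (2 * (π : ℂ)) * Perron.verticalIntegral (Perron.kernel x) T R)
    atTop _
  rcases hx.lt_or_gt with hneg | hpos
  · rw [if_neg hneg.not_gt, ← mul_zero (1 / (2 * (π : ℂ)))]
    exact (Perron.tendsto_verticalIntegral_kernel_of_neg hneg hT).const_mul _
  · have h2pi : 2 * (π : ℂ) ≠ 0 := by exact_mod_cast Real.two_pi_pos.ne'
    have := (Perron.tendsto_verticalIntegral_kernel_of_pos hpos hT).const_mul (1 / (2 * (π : ℂ)))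
    rw [one_div_mul_cancel h2pi] at this
    rwa [if_pos hpos]
end

section
/- Let λ > 0 and let β > 0 be the unique positive real solution of ∑_{k=1}^∞ (k+1)² e^{-β√(k(k+2))} = λ⁻¹. If s is a complex number with Re(s) > 0 and Im(s) ≠ 0 such that ∑_{k=1}^∞ (k+1)² e^{-s√(k(k+2))} = λ⁻¹, then Re(s) < β strictly. -/
/-!
Taking real parts, `λ⁻¹ = ∑ (k+1)² e^{-Re(s) E_k} cos(Im(s) E_k)`, which is strictly
smaller than `F(Re s)`, where `F(t) = ∑ (k+1)² e^{-t E_k}`: equality would force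
`cos(Im(s) E_k) = 1` for every `k`, making `E_1 / E_2 = √(3/8)` rational.
Since `F` is decreasing and `F(β) = λ⁻¹`, this gives `Re s < β`.
-/

/-- The LQG area eigenvalue `E_k = √(k(k+2))` for spin `k/2`. -/
noncomputable def Ek (k : ℕ+) : ℝ :=
  Real.sqrt (((k : ℕ) : ℝ) * (((k : ℕ) : ℝ) + 2))

open Real

lemma Complex.re_tsum_lt_tsum_norm {ι : Type*} {f : ι → ℂ} (hf : Summable f) {i : ι}
    (hi : (f i).re < ‖f i‖) : (∑' k, f k).re < ∑' k, ‖f k‖ := by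
  rw [Complex.re_tsum hf]
  exact Summable.tsum_lt_tsum (fun k => Complex.re_le_norm _) hi
    (Complex.reCLM.summable hf) hf.norm

lemma re_ofReal_mul_exp_lt_norm {c : ℝ} (hc : 0 < c) {w : ℂ} (hw : cos w.im ≠ 1) :
    ((c : ℂ) * Complex.exp w).re < ‖(c : ℂ) * Complex.exp w‖ := by
  rw [Complex.re_ofReal_mul, Complex.exp_re, norm_mul, Complex.norm_real, Complex.norm_exp,
    Real.norm_of_nonneg hc.le]
  exact mul_lt_mul_of_pos_left
    (mul_lt_of_lt_one_right (exp_pos _) (lt_of_le_of_ne (cos_le_one _) hw)) hc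

lemma not_irrational_div_of_cos_mul_eq_one {t a b : ℝ} (ht : t ≠ 0)
    (ha : cos (t * a) = 1) (hb : cos (t * b) = 1) : ¬ Irrational (a / b) := by
  obtain ⟨m, hm⟩ := (cos_eq_one_iff _).1 ha
  obtain ⟨n, hn⟩ := (cos_eq_one_iff _).1 hb
  refine fun h => h ⟨m / n, ?_⟩
  rw [← mul_div_mul_left a b ht, ← hm, ← hn, mul_div_mul_right _ _ (by positivity)]
  push_cast
  rfl

lemma Ek_pos (k : ℕ+) : 0 < Ek k :=
  Real.sqrt_pos.mpr (by positivity)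

lemma irrational_Ek_one_div_Ek_two : Irrational (Ek 1 / Ek 2) := by
  have h : Ek 1 / Ek 2 = √((3 / 8 : ℚ) : ℝ) := by
    rw [Ek, Ek, ← Real.sqrt_div' _ (by positivity)]
    norm_num
  rw [h, irrational_sqrt_ratCast_iff]
  norm_num

lemma exists_cos_mul_Ek_ne_one {t : ℝ} (ht : t ≠ 0) : ∃ k, cos (t * Ek k) ≠ 1 := by
  by_contra! h
  exact not_irrational_div_of_cos_mul_eq_one ht (h 1) (h 2) irrational_Ek_one_div_Ek_two

lemma norm_natCast_add_one_sq_mul_exp (n : ℕ) (s : ℂ) (x : ℝ) :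
    ‖((n : ℂ) + 1) ^ 2 * Complex.exp (-s * x)‖ = ((n : ℝ) + 1) ^ 2 * rexp (-s.re * x) := by
  rw [norm_mul, norm_pow, Complex.norm_exp]
  norm_cast
  simp

lemma re_natCast_add_one_sq_mul_exp_lt_norm (n : ℕ) {s : ℂ} {x : ℝ}
    (h : cos (s.im * x) ≠ 1) :
    (((n : ℂ) + 1) ^ 2 * Complex.exp (-s * x)).re
      < ‖((n : ℂ) + 1) ^ 2 * Complex.exp (-s * x)‖ := by
  have hcast : ((n : ℂ) + 1) ^ 2 = (((n : ℝ) + 1) ^ 2 : ℝ) := by push_cast; rfl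
  rw [hcast]
  refine re_ofReal_mul_exp_lt_norm (by positivity) ?_
  simpa using h

theorem stmt6_general (lam β : ℝ) (hlam : 0 < lam)
    (hβeq : ∑' k : ℕ+, (((k : ℕ) : ℝ) + 1) ^ 2 * Real.exp (-β * Ek k) = lam⁻¹)
    (s : ℂ) (him : s.im ≠ 0)
    (hseq : ∑' k : ℕ+, (((k : ℕ) : ℂ) + 1) ^ 2 * Complex.exp (-s * (Ek k : ℂ))
      = ((lam⁻¹ : ℝ) : ℂ)) :
    s.re < β := by
  have hlam_inv : lam⁻¹ ≠ 0 := inv_ne_zero hlam.ne'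
  have hs_summable :
      Summable fun k : ℕ+ => (((k : ℕ) : ℂ) + 1) ^ 2 * Complex.exp (-s * (Ek k : ℂ)) :=
    by_contra fun h => hlam_inv (by
      rw [tsum_eq_zero_of_not_summable h] at hseq
      exact_mod_cast hseq.symm)
  have hβ_summable : Summable fun k : ℕ+ => (((k : ℕ) : ℝ) + 1) ^ 2 * Real.exp (-β * Ek k) :=
    by_contra fun h => hlam_inv (by rw [← hβeq, tsum_eq_zero_of_not_summable h])
  obtain ⟨k, hk⟩ := exists_cos_mul_Ek_ne_one him
  have hlt :=
    Complex.re_tsum_lt_tsum_norm hs_summable (re_natCast_add_one_sq_mul_exp_lt_norm k hk)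
  have hsum_norm := hs_summable.norm
  simp only [hseq, Complex.ofReal_re, norm_natCast_add_one_sq_mul_exp] at hlt hsum_norm
  by_contra! hβs
  refine hlt.not_ge (hβeq ▸ hsum_norm.tsum_le_tsum (fun k => ?_) hβ_summable)
  gcongr
  exact (Ek_pos k).le

/-- Let `λ > 0` and `β > 0` the positive real solution of
`∑_{k≥1} (k+1)² e^{-β E_k} = λ⁻¹`.  Any complex `s` with `Re s > 0`, `Im s ≠ 0` and
`∑_{k≥1} (k+1)² e^{-s E_k} = λ⁻¹` satisfies `Re s < β` strictly. -/
theorem stmt6 (lam β : ℝ) (hlam : 0 < lam) (hβ : 0 < β)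
    (hβeq : ∑' k : ℕ+, (((k : ℕ) : ℝ) + 1) ^ 2 * Real.exp (-β * Ek k) = lam⁻¹)
    (s : ℂ) (hre : 0 < s.re) (him : s.im ≠ 0)
    (hseq : ∑' k : ℕ+, (((k : ℕ) : ℂ) + 1) ^ 2 * Complex.exp (-s * (Ek k : ℂ))
      = ((lam⁻¹ : ℝ) : ℂ)) :
    s.re < β :=
  stmt6_general lam β hlam hβeq s him hseq
end

section
/- Let λ > 0 and let β > 0 be the unique positive real solution of ∑_{k=1}^∞ (k+1)² e^{-β√(k(k+2))} = λ⁻¹. If s is a complex number with Re(s) > 0 such that the alternating series ∑_{k=1}^∞ (-1)^k (k+1)² e^{-s√(k(k+2))} equals λ⁻¹, then Re(s) < β strictly. -/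
open Real

lemma Summable.eq_of_le_of_tsum_eq {ι α : Type*} [AddCommGroup α] [PartialOrder α]
    [IsOrderedAddMonoid α] [TopologicalSpace α] [IsTopologicalAddGroup α] [OrderClosedTopology α]
    {f g : ι → α} (hf : Summable f) (hg : Summable g) (h : f ≤ g)
    (hfg : ∑' i, f i = ∑' i, g i) : f = g :=
  h.eq_of_not_lt fun hlt => (hf.tsum_strict_mono hg hlt).ne hfg

lemma neg_one_pow_mul_le_one {x : ℝ} (n : ℕ) (hx : |x| ≤ 1) : (-1) ^ n * x ≤ 1 :=
  (le_abs_self _).trans (by simpa [abs_mul] using hx)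

lemma exists_int_of_cos_mul_eq_neg_one_of_cos_mul_eq_one {t x y : ℝ}
    (hx : cos (t * x) = -1) (hy : cos (t * y) = 1) :
    ∃ m n : ℤ, (2 * m - 1) * y = 2 * n * x := by
  obtain ⟨m, hm⟩ := (cos_eq_one_iff _).1 (by rw [cos_add_pi, hx, neg_neg] : cos (t * x + π) = 1)
  obtain ⟨n, hn⟩ := (cos_eq_one_iff _).1 hy
  have ht : t ≠ 0 := by
    rintro rfl
    norm_num at hx
  refine ⟨m, n, mul_left_cancel₀ ht ?_⟩
  linear_combination -(2 * (m:ℝ) - 1) * hn + 2 * n * hm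

lemma odd_mul_sqrt_eight_ne_even_mul_sqrt_three (m n : ℤ) : (2 * m - 1) * √8 ≠ 2 * n * √3 := by
  intro h
  have hR : (2 * (2 * m - 1) ^ 2 : ℝ) = 3 * n ^ 2 := by
    have := congrArg (· ^ 2) h
    simp only [mul_pow, sq_sqrt (by norm_num : (0:ℝ) ≤ 8), sq_sqrt (by norm_num : (0:ℝ) ≤ 3)] at this
    linear_combination this / 4
  have hZ : 2 * (2 * m - 1) ^ 2 = 3 * n ^ 2 := by exact_mod_cast hR
  have := congrArg (Int.cast : ℤ → ZMod 4) hZ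
  push_cast at this
  revert this
  generalize (m : ZMod 4) = a
  generalize (n : ZMod 4) = b
  revert a b
  decide

lemma natCast_le_Ek (k : ℕ+) : ((k : ℕ) : ℝ) ≤ Ek k :=
  Real.le_sqrt_of_sq_le (by nlinarith)

lemma Ek_one : Ek 1 = √3 := by norm_num [Ek]

lemma Ek_two : Ek 2 = √8 := by norm_num [Ek]

noncomputable def areaWeight (b : ℝ) (k : ℕ+) : ℝ :=
  (((k : ℕ) : ℝ) + 1) ^ 2 * exp (-b * Ek k)

noncomputable def signedAreaWeight (s : ℂ) (k : ℕ+) : ℂ :=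
  (-1 : ℂ) ^ (k : ℕ) * (((k : ℕ) : ℂ) + 1) ^ 2 * Complex.exp (-s * (Ek k : ℂ))

lemma areaWeight_pos (b : ℝ) (k : ℕ+) : 0 < areaWeight b k := by
  unfold areaWeight; positivity

lemma areaWeight_le_of_le {a b : ℝ} (hab : a ≤ b) (k : ℕ+) : areaWeight b k ≤ areaWeight a k := by
  unfold areaWeight
  gcongr
  exact (natCast_le_Ek k).trans' (Nat.cast_nonneg _)

lemma summable_areaWeight {b : ℝ} (hb : 0 < b) : Summable (areaWeight b) := by
  refine .of_nonneg_of_le (fun k => (areaWeight_pos b k).le) (fun k => ?_)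
    (((summable_pow_mul_exp_neg_nat_mul 2 hb).mul_left 4).comp_injective PNat.coe_injective)
  have hk : (1 : ℝ) ≤ (k : ℕ) := by exact_mod_cast k.pos
  simp only [areaWeight, Function.comp_apply]
  have hexp : exp (-b * Ek k) ≤ exp (-b * (k : ℕ)) :=
    exp_le_exp.2 (mul_le_mul_of_nonpos_left (natCast_le_Ek k) (neg_nonpos.2 hb.le))
  calc _ ≤ (((k : ℕ) : ℝ) + 1) ^ 2 * exp (-b * (k : ℕ)) := by gcongr
    _ ≤ 4 * (((k : ℕ) : ℝ) ^ 2 * exp (-b * (k : ℕ))) := by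
      rw [← mul_assoc]; gcongr; nlinarith

lemma norm_signedAreaWeight (s : ℂ) (k : ℕ+) : ‖signedAreaWeight s k‖ = areaWeight s.re k := by
  simp only [signedAreaWeight, neg_mul, Complex.norm_mul, norm_pow, norm_neg, norm_one, one_pow,
    one_mul, Complex.norm_exp, Complex.neg_re, Complex.re_mul_ofReal, areaWeight]
  rw [← Nat.cast_add_one, ← Nat.cast_add_one, Complex.norm_natCast]

lemma re_signedAreaWeight (s : ℂ) (k : ℕ+) :
    (signedAreaWeight s k).re = areaWeight s.re k * ((-1) ^ (k : ℕ) * cos (s.im * Ek k)) := by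
  have : signedAreaWeight s k =
      (((-1 : ℝ) ^ (k : ℕ) * (((k : ℕ) : ℝ) + 1) ^ 2 : ℝ) : ℂ) * Complex.exp (-s * (Ek k : ℂ)) := by
    simp [signedAreaWeight]
  rw [this, Complex.re_ofReal_mul, Complex.exp_re]
  simp only [neg_mul, Complex.neg_re, Complex.neg_im, Complex.re_mul_ofReal, Complex.im_mul_ofReal,
    cos_neg, areaWeight]
  ring

lemma summable_signedAreaWeight {s : ℂ} (hs : 0 < s.re) : Summable (signedAreaWeight s) :=
  .of_norm_bounded (summable_areaWeight hs) fun k => (norm_signedAreaWeight s k).le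

lemma neg_one_pow_mul_cos_eq_one_of_tsum_eq {β : ℝ} {s : ℂ} (hβ : 0 < β) (hβs : β ≤ s.re)
    (heq : ∑' k, signedAreaWeight s k = ((∑' k, areaWeight β k : ℝ) : ℂ)) (k : ℕ+) :
    (-1) ^ (k : ℕ) * cos (s.im * Ek k) = 1 := by
  have hs : 0 < s.re := hβ.trans_le hβs
  have hphase (k : ℕ+) := neg_one_pow_mul_le_one (k : ℕ) (abs_cos_le_one (s.im * Ek k))
  have hle : (fun k => (signedAreaWeight s k).re) ≤ areaWeight β := fun k => by
    dsimp only
    rw [re_signedAreaWeight]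
    exact (mul_le_of_le_one_right (areaWeight_pos _ k).le (hphase k)).trans
      (areaWeight_le_of_le hβs k)
  have hre_eq := Summable.eq_of_le_of_tsum_eq
    (Complex.hasSum_re (summable_signedAreaWeight hs).hasSum).summable (summable_areaWeight hβ) hle
    (by rw [← Complex.re_tsum (summable_signedAreaWeight hs), heq, Complex.ofReal_re])
  have hk := congrFun hre_eq k
  rw [re_signedAreaWeight] at hk
  refine le_antisymm (hphase k) (le_of_mul_le_mul_left ?_ (areaWeight_pos s.re k))
  rw [hk, mul_one]
  exact areaWeight_le_of_le hβs k

theorem stmt7_general (lam β : ℝ) (hβ : 0 < β)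
    (hβeq : ∑' k : ℕ+, (((k : ℕ) : ℝ) + 1) ^ 2 * Real.exp (-β * Ek k) = lam⁻¹)
    (s : ℂ)
    (hseq : ∑' k : ℕ+, (-1 : ℂ) ^ (k : ℕ) * (((k : ℕ) : ℂ) + 1) ^ 2 *
        Complex.exp (-s * (Ek k : ℂ)) = ((lam⁻¹ : ℝ) : ℂ)) :
    s.re < β := by
  by_contra! hβs
  have hphase := neg_one_pow_mul_cos_eq_one_of_tsum_eq hβ hβs (by
    rw [show ∑' k, areaWeight β k = lam⁻¹ from hβeq]; exact hseq)
  have h1 := hphase 1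
  have h2 := hphase 2
  rw [Ek_one] at h1
  rw [Ek_two] at h2
  norm_num at h1 h2
  obtain ⟨m, n, h⟩ := exists_int_of_cos_mul_eq_neg_one_of_cos_mul_eq_one (neg_eq_iff_eq_neg.mp h1) h2
  exact odd_mul_sqrt_eight_ne_even_mul_sqrt_three m n h

/-- Let `λ > 0` and `β > 0` the positive real solution of
`∑_{k≥1} (k+1)² e^{-β E_k} = λ⁻¹`.  Any complex `s` with `Re s > 0` solving the
alternating equation `∑_{k≥1} (-1)^k (k+1)² e^{-s E_k} = λ⁻¹` satisfies
`Re s < β` strictly. -/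
theorem stmt7 (lam β : ℝ) (hlam : 0 < lam) (hβ : 0 < β)
    (hβeq : ∑' k : ℕ+, (((k : ℕ) : ℝ) + 1) ^ 2 * Real.exp (-β * Ek k) = lam⁻¹)
    (s : ℂ) (hre : 0 < s.re)
    (hseq : ∑' k : ℕ+, (-1 : ℂ) ^ (k : ℕ) * (((k : ℕ) : ℂ) + 1) ^ 2 *
        Complex.exp (-s * (Ek k : ℂ)) = ((lam⁻¹ : ℝ) : ℂ)) :
    s.re < β :=
  stmt7_general lam β hβ hβeq s hseq
end

section
/- For every real λ > 0 there exists a real s > 0 such that the family indexed by pairs (p, (k_1, …, k_p)) — with p a positive integer and each k_i a positive integer — whose value is λ^p · (∏_{i=1}^p (k_i+1)²) · e^{-s ∑_{i=1}^p √(k_i(k_i+2))}, is summable; in particular ∑_{p=1}^∞ ∑_{k_1,…,k_p ≥ 1} λ^p ∏_{i=1}^p (k_i+1)² e^{-s·α_{p,k⃗}} < ∞, where α_{p,k⃗} = ∑_{i=1}^p √(k_i(k_i+2)). -/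
/-!
The summand factorises over the faces: it is `∏ᵢ ζ(kᵢ)` with the single-face weight
`ζ(k) = λ (k+1)² e^{-s √(k(k+2))}`. Summing over `k⃗ ∈ ℕ₊^p` first gives `(∑ₖ ζ(k))^p`, so the
whole family is summable as soon as `∑ₖ ζ(k) < 1`. Since `(k+1)² ≤ 4^k` and `k ≤ √(k(k+2))`,
`ζ(k) ≤ λ (4e^{-s})^k`, and `s = log (8(λ+1))` makes the geometric bound `λ/(2λ+1) < 1`.
-/

open Real Finset

theorem hasSum_fin_pi_prod {β : Type*} {h : β → ℝ} (h_nonneg : ∀ k, 0 ≤ h k)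
    (hh : Summable h) (n : ℕ) :
    HasSum (fun v : Fin n → β => ∏ i, h (v i)) ((∑' k, h k) ^ n) := by
  induction n with
  | zero => simp
  | succ n ih =>
    have hprod : Summable fun x : β × (Fin n → β) => h x.1 * ∏ i, h (x.2 i) :=
      hh.mul_of_nonneg (g := fun v : Fin n → β => ∏ i, h (v i)) ih.summable h_nonneg
        fun v => prod_nonneg fun i _ => h_nonneg (v i)
    have hcons : (fun v : Fin (n + 1) → β => ∏ i, h (v i)) ∘ Fin.consEquiv (fun _ => β) =
        fun x => h x.1 * ∏ i, h (x.2 i) := by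
      funext x
      simp [Fin.consEquiv, Fin.prod_univ_succ]
    rw [← (Fin.consEquiv fun _ => β).hasSum_iff, hcons, pow_succ']
    exact HasSum.mul (f := h) (g := fun v : Fin n → β => ∏ i, h (v i)) hh.hasSum ih hprod

theorem summable_sigma_pi_prod {β : Type*} {h : β → ℝ} (h_nonneg : ∀ k, 0 ≤ h k)
    (hh : Summable h) (h_lt_one : ∑' k, h k < 1) :
    Summable fun x : Σ p : ℕ+, Fin (p : ℕ) → β => ∏ i, h (x.2 i) := by
  refine (summable_sigma_of_nonneg fun x => prod_nonneg fun i _ => h_nonneg _).mpr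
    ⟨fun p => (hasSum_fin_pi_prod h_nonneg hh p).summable, ?_⟩
  simp_rw [(hasSum_fin_pi_prod h_nonneg hh _).tsum_eq]
  exact (summable_geometric_of_lt_one (tsum_nonneg h_nonneg) h_lt_one).comp_injective
    PNat.coe_injective

theorem hasSum_pnat_geometric {q : ℝ} (h₀ : 0 ≤ q) (h₁ : q < 1) :
    HasSum (fun k : ℕ+ => q ^ (k : ℕ)) (q / (1 - q)) := by
  rw [hasSum_pnat_iff_hasSum_succ]
  simpa only [pow_succ', div_eq_mul_inv] using (hasSum_geometric_of_lt_one h₀ h₁).mul_left q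

theorem add_one_sq_le_four_pow (k : ℕ) : ((k : ℝ) + 1) ^ 2 ≤ 4 ^ k := by
  have h : (k : ℝ) + 1 ≤ 2 ^ k := by exact_mod_cast Nat.lt_two_pow_self
  calc ((k : ℝ) + 1) ^ 2 ≤ ((2 : ℝ) ^ k) ^ 2 := by gcongr
    _ = 4 ^ k := by rw [← pow_mul, mul_comm, pow_mul]; norm_num

theorem le_sqrt_mul_add_two {x : ℝ} (hx : 0 ≤ x) : x ≤ √(x * (x + 2)) :=
  le_sqrt_of_sq_le (by nlinarith)

theorem nonneg_of_four_mul_exp_neg_lt_one {s : ℝ} (hq : 4 * exp (-s) < 1) : 0 ≤ s := by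
  have : exp (-s) < 1 := by linarith [exp_pos (-s)]
  linarith [Real.exp_lt_one_iff.mp this]

/-- The weight `λ d_k² e^{-s E_k}` of a single face carrying spin `k/2`. -/
noncomputable def faceWeight (lam s : ℝ) (k : ℕ) : ℝ :=
  lam * ((k : ℝ) + 1) ^ 2 * exp (-s * √((k : ℝ) * ((k : ℝ) + 2)))

section faceWeight

variable {lam s : ℝ}

theorem faceWeight_nonneg (hlam : 0 ≤ lam) (k : ℕ) : 0 ≤ faceWeight lam s k := by
  unfold faceWeight; positivity

theorem prod_faceWeight {n : ℕ} (v : Fin n → ℕ) :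
    ∏ i, faceWeight lam s (v i) =
      lam ^ n * (∏ i, ((v i : ℝ) + 1) ^ 2) *
        exp (-s * ∑ i, √((v i : ℝ) * ((v i : ℝ) + 2))) := by
  simp only [faceWeight, prod_mul_distrib, prod_const, card_univ, Fintype.card_fin, mul_sum,
    exp_sum]

theorem faceWeight_le_geometric (hlam : 0 ≤ lam) (hs : 0 ≤ s) (k : ℕ) :
    faceWeight lam s k ≤ lam * (4 * exp (-s)) ^ k := by
  have hexp : exp (-s * √((k : ℝ) * ((k : ℝ) + 2))) ≤ exp (-s) ^ k := by
    rw [← exp_nat_mul, exp_le_exp]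
    nlinarith [le_sqrt_mul_add_two (Nat.cast_nonneg (α := ℝ) k)]
  rw [faceWeight, mul_assoc, mul_pow]
  gcongr
  exact add_one_sq_le_four_pow k

theorem summable_faceWeight (hlam : 0 ≤ lam) (hq : 4 * exp (-s) < 1) :
    Summable fun k : ℕ+ => faceWeight lam s k :=
  .of_nonneg_of_le (fun k => faceWeight_nonneg hlam k)
    (fun k => faceWeight_le_geometric hlam (nonneg_of_four_mul_exp_neg_lt_one hq) k)
    ((hasSum_pnat_geometric (by positivity) hq).summable.mul_left lam)

theorem tsum_faceWeight_le (hlam : 0 ≤ lam) (hq : 4 * exp (-s) < 1) :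
    ∑' k : ℕ+, faceWeight lam s k ≤ lam * (4 * exp (-s) / (1 - 4 * exp (-s))) :=
  hasSum_le (fun k : ℕ+ => faceWeight_le_geometric hlam (nonneg_of_four_mul_exp_neg_lt_one hq) k)
    (summable_faceWeight hlam hq).hasSum
    ((hasSum_pnat_geometric (by positivity) hq).mul_left lam)

end faceWeight

/-- For every `λ > 0` there is `s > 0` such that the family indexed by pairs
`(p, (k₁, …, k_p))` of a positive integer `p` and positive integers `kᵢ`, with value
`λ^p ∏ᵢ (kᵢ+1)² e^{-s ∑ᵢ √(kᵢ(kᵢ+2))}`, is summable. -/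
theorem stmt10 (lam : ℝ) (hlam : 0 < lam) :
    ∃ s : ℝ, 0 < s ∧
      Summable (fun x : Σ p : ℕ+, Fin (p : ℕ) → ℕ+ =>
        lam ^ ((x.1 : ℕ)) *
          (∏ i, (((x.2 i : ℕ) : ℝ) + 1) ^ 2) *
          Real.exp (-s * ∑ i,
            Real.sqrt (((x.2 i : ℕ) : ℝ) * (((x.2 i : ℕ) : ℝ) + 2)))) := by
  set s := log (8 * (lam + 1))
  refine ⟨s, log_pos (by linarith), ?_⟩
  have hq : 4 * exp (-s) = 1 / (2 * (lam + 1)) := by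
    rw [exp_neg, exp_log (by positivity)]
    field_simp
    ring
  have hq_lt_one : 4 * exp (-s) < 1 := by
    rw [hq, div_lt_one (by positivity)]
    linarith
  have htsum : ∑' k : ℕ+, faceWeight lam s k < 1 := by
    refine (tsum_faceWeight_le hlam.le hq_lt_one).trans_lt ?_
    rw [hq]
    field_simp
    rw [div_lt_one (by linarith)]
    linarith
  simpa only [prod_faceWeight] using summable_sigma_pi_prod (h := fun k : ℕ+ => faceWeight lam s k)
    (fun k => faceWeight_nonneg hlam.le k) (summable_faceWeight hlam.le hq_lt_one) htsum
end
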